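/- arXiv:2402.01607 — 4 statements merged into one kernel-verified Lean document; each statement's English description precedes it below -/
import Mathlib

section
/- Let m be a Borel probability measure on ℝ, f : ℝ → ℝ strictly monotone increasing, and set ν = Measure.map f m. Then for every u ∈ ℝ, min(F_m(u), 1 − F_m(u)) = min(F_ν(f u), 1 − F_ν(f u)). Consequently, for every ε ≥ 0, the exogenous CDF naturalness measure of u exceeds ε if and only if the conditional CDF naturalness measure of f(u) exceeds ε; that is, the local ε-natural generation criteria based on Choice (2) and Choice (3) are equivalent under a strictly increasing structural function. -/
open MeasureTheory

/-- The cumulative distribution function of a Borel measure on ℝ: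
`F_m(x) = m((-∞, x])`. -/
noncomputable def cdfOf (m : Measure ℝ) (x : ℝ) : ℝ := (m (Set.Iic x)).toReal

theorem StrictMono.preimage_Iic_apply {α β : Type*} [LinearOrder α] [Preorder β]
    {f : α → β} (hf : StrictMono f) (a : α) : f ⁻¹' Set.Iic (f a) = Set.Iic a :=
  Set.ext fun _ => hf.le_iff_le

theorem cdfOf_map_apply_of_strictMono (m : Measure ℝ) {f : ℝ → ℝ} (hf : StrictMono f)
    (u : ℝ) : cdfOf (m.map f) (f u) = cdfOf m u := by
  rw [cdfOf, Measure.map_apply hf.monotone.measurable measurableSet_Iic,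
    hf.preimage_Iic_apply, cdfOf]

theorem naturalness_choice2_eq_choice3_general (m : Measure ℝ)
    (f : ℝ → ℝ) (hf : StrictMono f) :
    (∀ u : ℝ,
      min (cdfOf m u) (1 - cdfOf m u)
        = min (cdfOf (Measure.map f m) (f u)) (1 - cdfOf (Measure.map f m) (f u)))
    ∧ ∀ ε : ℝ, 0 ≤ ε → ∀ u : ℝ,
      (ε < min (cdfOf m u) (1 - cdfOf m u)
        ↔ ε < min (cdfOf (Measure.map f m) (f u)) (1 - cdfOf (Measure.map f m) (f u))) := by
  refine ⟨fun u => ?_, fun ε _ u => ?_⟩ <;> rw [cdfOf_map_apply_of_strictMono m hf]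

/-- The exogenous CDF naturalness measure (Choice (2)) of a noise value `u` agrees with
the conditional CDF naturalness measure (Choice (3)) of the generated outcome `f u`, when
the structural function `f` is strictly increasing; consequently, the local ε-natural
generation criteria based on the two measures are equivalent. -/
theorem naturalness_choice2_eq_choice3 (m : Measure ℝ) [IsProbabilityMeasure m]
    (f : ℝ → ℝ) (hf : StrictMono f) :
    (∀ u : ℝ,
      min (cdfOf m u) (1 - cdfOf m u)
        = min (cdfOf (Measure.map f m) (f u)) (1 - cdfOf (Measure.map f m) (f u)))
    ∧ ∀ ε : ℝ, 0 ≤ ε → ∀ u : ℝ,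
      (ε < min (cdfOf m u) (1 - cdfOf m u)
        ↔ ε < min (cdfOf (Measure.map f m) (f u)) (1 - cdfOf (Measure.map f m) (f u))) :=
  naturalness_choice2_eq_choice3_general m f hf
end

section
/- (Abduction.) Fix n : ℕ, parent sets pa : Fin n → Finset (Fin n) such that every j ∈ pa i satisfies j < i, and mechanisms f i : (Fin n → ℝ) → ℝ → ℝ satisfying locality (f i v = f i w whenever v j = w j for all j ∈ pa i). If in addition every slice u ↦ f i v u is a bijection of ℝ (for every i : Fin n and every v : Fin n → ℝ), then the solution map solve : (Fin n → ℝ) → (Fin n → ℝ) is a bijection, and its inverse is given by abduction: for every v : Fin n → ℝ, (solve⁻¹ v) i is the unique u₀ ∈ ℝ with f i v u₀ = v i. -/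
/-!
Noise is recovered coordinatewise from the observation: `solve u i = f i (solve u) (u i)` and
injectivity of the slice `f i (solve u)` determine `u i`, so `solve` is injective. Conversely,
given `v`, put `u i := (f i v)⁻¹ (v i)`; then `solve u` and `v` are both fixed points of the
structural equations with noise `u`, and since every equation only reads strictly earlier
coordinates, well-founded induction along `<` shows that such a fixed point is unique.
-/

open Function

section StructuralEquations

variable {ι α β : Type*} {f : ι → (ι → α) → β → α} {solve : (ι → β) → ι → α}

theorem solve_injective (hinj : ∀ i v, Injective (f i v))
    (hsolve : ∀ u i, solve u i = f i (solve u) (u i)) : Injective solve := by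
  intro u u' h
  funext i
  apply hinj i (solve u)
  rw [← hsolve u i, h, ← hsolve u' i]

variable [LT ι] [WellFoundedLT ι]

theorem eq_of_fixed_of_forall_lt_eq (F : (ι → α) → ι → α)
    (hF : ∀ i x y, (∀ j < i, x j = y j) → F x i = F y i)
    {x y : ι → α} (hx : ∀ i, x i = F x i) (hy : ∀ i, y i = F y i) : x = y := by
  funext i
  induction i using WellFoundedLT.induction with
  | ind i ih => rw [hx, hy, hF i x y ih]

theorem solve_surjective (hpast : ∀ i v w, (∀ j < i, v j = w j) → f i v = f i w)
    (hsurj : ∀ i v, Surjective (f i v))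
    (hsolve : ∀ u i, solve u i = f i (solve u) (u i)) : Surjective solve := by
  intro v
  let u i := surjInv (hsurj i v) (v i)
  refine ⟨u, eq_of_fixed_of_forall_lt_eq (fun x i => f i x (u i))
    (fun i x y h => by rw [hpast i x y h]) (hsolve u) fun i => ?_⟩
  exact (surjInv_eq (hsurj i v) (v i)).symm

end StructuralEquations

/-- Abduction: in a topologically ordered SCM whose mechanism slices `u ↦ f i v u`
are all bijections of ℝ, the solution map `solve` is a bijection, and its inverse is
given by abduction: `(solve⁻¹ v) i` is the unique `u₀` with `f i v u₀ = v i`. -/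
theorem scm_solve_bijective_abduction (n : ℕ) (pa : Fin n → Finset (Fin n))
    (hpa : ∀ i : Fin n, ∀ j ∈ pa i, j < i)
    (f : Fin n → (Fin n → ℝ) → ℝ → ℝ)
    (hloc : ∀ i : Fin n, ∀ v w : Fin n → ℝ, (∀ j ∈ pa i, v j = w j) → f i v = f i w)
    (hbij : ∀ (i : Fin n) (v : Fin n → ℝ), Function.Bijective (f i v))
    (solve : (Fin n → ℝ) → (Fin n → ℝ))
    (hsolve : ∀ (u : Fin n → ℝ) (i : Fin n), solve u i = f i (solve u) (u i)) :
    Function.Bijective solve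
    ∧ ∀ (v : Fin n → ℝ) (i : Fin n),
        f i v (Function.invFun solve v i) = v i
        ∧ ∀ u₀ : ℝ, f i v u₀ = v i → u₀ = Function.invFun solve v i := by
  have hpast : ∀ i v w, (∀ j < i, v j = w j) → f i v = f i w :=
    fun i v w h => hloc i v w fun j hj => h j (hpa i j hj)
  have hsolve_bij : Bijective solve :=
    ⟨solve_injective (fun i v => (hbij i v).1) hsolve,
      solve_surjective hpast (fun i v => (hbij i v).2) hsolve⟩
  refine ⟨hsolve_bij, fun v i => ?_⟩
  have habduct : f i v (invFun solve v i) = v i := by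
    have h := hsolve (invFun solve v) i
    rw [invFun_eq (hsolve_bij.2 v)] at h
    exact h.symm
  exact ⟨habduct, fun u₀ hu₀ => (hbij i v).1 (hu₀.trans habduct.symm)⟩
end

section
/- (Quantile preservation at non-intervened nodes.) Consider a topologically ordered SCM over n real variables in which every slice u ↦ f i v u is strictly monotone increasing. Let u : Fin n → ℝ, let v = solve u be the factual instance, let C ⊆ Fin n and c : Fin n → ℝ, and let v* = solveC u be the counterfactual instance under do(C = c). Then for every i ∉ C, F_{ν i v*}(v* i) = F_{ν i v}(v i), both sides being equal to F_{μ i}(u i): the counterfactual value at each non-intervened node occupies the same conditional quantile, given its counterfactual parents, as the factual value does given its factual parents. -/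
open MeasureTheory

theorem cdfOf_map_apply_of_strictMono_s7 (m : Measure ℝ) {g : ℝ → ℝ} (hg : StrictMono g)
    (x : ℝ) : cdfOf (Measure.map g m) (g x) = cdfOf m x := by
  have hpre : g ⁻¹' Set.Iic (g x) = Set.Iic x := Set.ext fun _ => hg.le_iff_le
  rw [cdfOf, Measure.map_apply hg.monotone.measurable measurableSet_Iic, hpre, cdfOf]

theorem quantile_preserved_at_nonintervened_general (n : ℕ)
    (f : Fin n → (Fin n → ℝ) → ℝ → ℝ)
    (hmono : ∀ (i : Fin n) (v : Fin n → ℝ), StrictMono (f i v))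
    (μ : Fin n → Measure ℝ)
    (solve : (Fin n → ℝ) → (Fin n → ℝ))
    (hsolve : ∀ (u : Fin n → ℝ) (i : Fin n), solve u i = f i (solve u) (u i))
    (C : Set (Fin n)) (c : Fin n → ℝ)
    (solveC : (Fin n → ℝ) → (Fin n → ℝ))
    (hsolveC : ∀ u : Fin n → ℝ,
      (∀ i ∈ C, solveC u i = c i) ∧ ∀ i ∉ C, solveC u i = f i (solveC u) (u i))
    (u : Fin n → ℝ) (i : Fin n) (hi : i ∉ C) :
    cdfOf (Measure.map (f i (solveC u)) (μ i)) (solveC u i)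
      = cdfOf (Measure.map (f i (solve u)) (μ i)) (solve u i)
    ∧ cdfOf (Measure.map (f i (solveC u)) (μ i)) (solveC u i) = cdfOf (μ i) (u i) := by
  -- Both instances feed the same noise `u i` into a strictly increasing slice at node `i`.
  have hquantile (v : Fin n → ℝ) :
      cdfOf (Measure.map (f i v) (μ i)) (f i v (u i)) = cdfOf (μ i) (u i) :=
    cdfOf_map_apply_of_strictMono_s7 (μ i) (hmono i v) (u i)
  rw [(hsolveC u).2 i hi, hsolve u i, hquantile, hquantile]
  exact ⟨rfl, rfl⟩

/-- Quantile preservation at non-intervened nodes: in a topologically ordered SCM with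
strictly increasing mechanism slices, with factual instance `v = solve u` and
counterfactual instance `v* = solveC u` under `do(C = c)`, for every `i ∉ C` the
counterfactual value occupies the same conditional quantile given its counterfactual
parents as the factual value does given its factual parents:
`F_{ν i v*}(v* i) = F_{ν i v}(v i) = F_{μ i}(u i)`, where
`ν i p = Measure.map (f i p) (μ i)`. -/
theorem quantile_preserved_at_nonintervened (n : ℕ) (pa : Fin n → Finset (Fin n))
    (hpa : ∀ i : Fin n, ∀ j ∈ pa i, j < i)
    (f : Fin n → (Fin n → ℝ) → ℝ → ℝ)
    (hloc : ∀ i : Fin n, ∀ v w : Fin n → ℝ, (∀ j ∈ pa i, v j = w j) → f i v = f i w)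
    (hmono : ∀ (i : Fin n) (v : Fin n → ℝ), StrictMono (f i v))
    (μ : Fin n → Measure ℝ) [∀ i, IsProbabilityMeasure (μ i)]
    (solve : (Fin n → ℝ) → (Fin n → ℝ))
    (hsolve : ∀ (u : Fin n → ℝ) (i : Fin n), solve u i = f i (solve u) (u i))
    (C : Set (Fin n)) (c : Fin n → ℝ)
    (solveC : (Fin n → ℝ) → (Fin n → ℝ))
    (hsolveC : ∀ u : Fin n → ℝ,
      (∀ i ∈ C, solveC u i = c i) ∧ ∀ i ∉ C, solveC u i = f i (solveC u) (u i))
    (u : Fin n → ℝ) (i : Fin n) (hi : i ∉ C) :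
    cdfOf (Measure.map (f i (solveC u)) (μ i)) (solveC u i)
      = cdfOf (Measure.map (f i (solve u)) (μ i)) (solve u i)
    ∧ cdfOf (Measure.map (f i (solveC u)) (μ i)) (solveC u i) = cdfOf (μ i) (u i) :=
  quantile_preserved_at_nonintervened_general n f hmono μ solve hsolve C c solveC hsolveC u i hi
end

section
/- (Natural counterfactual instances lie in the support of the observational distribution.) Consider a topologically ordered SCM over n real variables in which each mechanism f i is jointly continuous as a map (Fin n → ℝ) × ℝ → ℝ (with the product topology on Fin n → ℝ), every slice u ↦ f i v u is a strictly monotone increasing bijection of ℝ, and every noise distribution μ i has order-connected topological support. Let μ̂ = Measure.pi μ be the product noise distribution on Fin n → ℝ. Let u : Fin n → ℝ, C ⊆ Fin n, c : Fin n → ℝ, and let v* = solveC u be the counterfactual instance. If v* satisfies the naturalness condition 0 < F_{ν i v*}(v* i) < 1 for every i : Fin n (in particular, if it satisfies ε-natural generation for some ε ≥ 0), then v* belongs to the topological support of the observational distribution Measure.map solve μ̂. -/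
open MeasureTheory

/-- The topological support of a measure: the set of points every open neighborhood
of which has positive measure. -/
def msupport {α : Type*} [TopologicalSpace α] {mα : MeasurableSpace α}
    (m : Measure α) : Set α :=
  {x | ∀ U : Set α, IsOpen U → x ∈ U → 0 < m U}

lemma compl_msupport_null {α : Type*} [TopologicalSpace α] [SecondCountableTopology α]
    {mα : MeasurableSpace α} (m : Measure α) :
    m (msupport m)ᶜ = 0 := by
  obtain ⟨T, hTc, hTS, hTeq⟩ := TopologicalSpace.isOpen_sUnion_countable
    {U : Set α | IsOpen U ∧ m U = 0} (fun s hs => hs.1)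
  have h2 : m (⋃₀ T) = 0 := by
    rw [Set.sUnion_eq_biUnion]
    exact measure_biUnion_null_iff hTc |>.mpr (fun s hs => (hTS hs).2)
  refine measure_mono_null ?_ (hTeq ▸ h2)
  intro x hx
  simp only [msupport, Set.mem_compl_iff, Set.mem_setOf_eq, not_forall] at hx
  obtain ⟨U, hU, hxU, hpos⟩ := hx
  exact ⟨U, ⟨hU, not_not.mp (by simpa [pos_iff_ne_zero] using hpos)⟩, hxU⟩

lemma exists_mem_msupport {α : Type*} [TopologicalSpace α] [SecondCountableTopology α]
    {mα : MeasurableSpace α} (m : Measure α) {s : Set α} (hs : m s ≠ 0) :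
    ∃ x ∈ s, x ∈ msupport m := by
  by_contra h
  push_neg at h
  exact hs (measure_mono_null (fun x hx => h x hx) (compl_msupport_null m))

/-- Natural counterfactual instances lie in the support of the observational
distribution: in a topologically ordered SCM with jointly continuous mechanisms whose
slices are strictly increasing bijections of ℝ and whose noise distributions have
order-connected supports, any counterfactual instance `v* = solveC u` under `do(C = c)`
satisfying the naturalness condition `0 < F_{ν i v*}(v* i) < 1` for every `i`
(in particular, any instance satisfying ε-natural generation) belongs to the topological
support of the observational distribution `Measure.map solve (Measure.pi μ)`. -/
theorem natural_counterfactual_mem_support (n : ℕ) (pa : Fin n → Finset (Fin n))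
    (hpa : ∀ i : Fin n, ∀ j ∈ pa i, j < i)
    (f : Fin n → (Fin n → ℝ) → ℝ → ℝ)
    (hloc : ∀ i : Fin n, ∀ v w : Fin n → ℝ, (∀ j ∈ pa i, v j = w j) → f i v = f i w)
    (hcont : ∀ i : Fin n, Continuous (fun q : (Fin n → ℝ) × ℝ => f i q.1 q.2))
    (hmono : ∀ (i : Fin n) (v : Fin n → ℝ), StrictMono (f i v))
    (hbij : ∀ (i : Fin n) (v : Fin n → ℝ), Function.Bijective (f i v))
    (μ : Fin n → Measure ℝ) [∀ i, IsProbabilityMeasure (μ i)]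
    (hconn : ∀ i : Fin n, ∀ a b x : ℝ, a ∈ msupport (μ i) → b ∈ msupport (μ i) →
      a ≤ x → x ≤ b → x ∈ msupport (μ i))
    (solve : (Fin n → ℝ) → (Fin n → ℝ))
    (hsolve : ∀ (u : Fin n → ℝ) (i : Fin n), solve u i = f i (solve u) (u i))
    (C : Set (Fin n)) (c : Fin n → ℝ)
    (solveC : (Fin n → ℝ) → (Fin n → ℝ))
    (hsolveC : ∀ u : Fin n → ℝ,
      (∀ i ∈ C, solveC u i = c i) ∧ ∀ i ∉ C, solveC u i = f i (solveC u) (u i))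
    (u : Fin n → ℝ)
    (hnat : ∀ i : Fin n,
      0 < cdfOf (Measure.map (f i (solveC u)) (μ i)) (solveC u i)
      ∧ cdfOf (Measure.map (f i (solveC u)) (μ i)) (solveC u i) < 1) :
    solveC u ∈ msupport (Measure.map solve (Measure.pi μ)) := by
  classical
  set v : Fin n → ℝ := solveC u with hv
  -- choose noise values realizing v* observationally
  have hsurj : ∀ i : Fin n, ∃ x : ℝ, f i v x = v i := fun i => (hbij i v).2 (v i)
  choose t ht using hsurj
  -- continuity of the coordinates of solve, by strong induction
  have hsc : ∀ k : ℕ, ∀ i : Fin n, (i : ℕ) < k →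
      Continuous (fun w : Fin n → ℝ => solve w i) := by
    intro k
    induction k with
    | zero => intro i hi; omega
    | succ k IH =>
      intro i hi
      have hrw : ∀ w : Fin n → ℝ,
          solve w i = f i (fun j => if j ∈ pa i then solve w j else 0) (w i) := by
        intro w
        rw [hsolve w i]
        rw [hloc i (solve w) (fun j => if j ∈ pa i then solve w j else 0)
          (fun j hj => by simp [hj])]
      simp only [hrw]
      refine (hcont i).comp (Continuous.prodMk ?_ (continuous_apply i))
      refine continuous_pi (fun j => ?_)
      by_cases hj : j ∈ pa i
      · have heq : (fun w : Fin n → ℝ => if j ∈ pa i then solve w j else 0)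
            = fun w : Fin n → ℝ => solve w j := funext fun w => if_pos hj
        exact heq ▸ IH j (by have := hpa i j hj; omega)
      · have heq : (fun w : Fin n → ℝ => if j ∈ pa i then solve w j else 0)
            = fun _ : Fin n → ℝ => (0 : ℝ) := funext fun w => if_neg hj
        exact heq ▸ (continuous_const : Continuous fun _ : Fin n → ℝ => (0:ℝ))
  have hsolve_cont : Continuous solve := continuous_pi (fun i => hsc n i i.2)
  -- solve t = v
  have hkey : ∀ k : ℕ, ∀ i : Fin n, (i : ℕ) < k → solve t i = v i := by
    intro k
    induction k with
    | zero => intro i hi; omega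
    | succ k IH =>
      intro i hi
      rw [hsolve t i,
        hloc i (solve t) v (fun j hj => IH j (by have := hpa i j hj; omega)), ht i]
  have hst : solve t = v := funext fun i => hkey n i i.2
  -- the slice mechanisms are continuous
  have hg : ∀ i : Fin n, Continuous (f i v) := by
    intro i
    exact (hcont i).comp (continuous_const.prodMk continuous_id)
  -- compute the cdf preimages
  have hIic : ∀ i : Fin n,
      Measure.map (f i v) (μ i) (Set.Iic (v i)) = μ i (Set.Iic (t i)) := by
    intro i
    rw [Measure.map_apply (hg i).measurable measurableSet_Iic]
    congr 1
    ext x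
    simp only [Set.mem_preimage, Set.mem_Iic]
    rw [← ht i, (hmono i v).le_iff_le]
  have hpos : ∀ i : Fin n, μ i (Set.Iic (t i)) ≠ 0 := by
    intro i
    have h := (hnat i).1
    rw [show cdfOf (Measure.map (f i (solveC u)) (μ i)) (solveC u i)
        = (Measure.map (f i v) (μ i) (Set.Iic (v i))).toReal from rfl, hIic i] at h
    intro h0
    rw [h0] at h
    simp at h
  have hlt : ∀ i : Fin n, μ i (Set.Ioi (t i)) ≠ 0 := by
    intro i
    have h := (hnat i).2
    rw [show cdfOf (Measure.map (f i (solveC u)) (μ i)) (solveC u i)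
        = (Measure.map (f i v) (μ i) (Set.Iic (v i))).toReal from rfl, hIic i] at h
    intro h0
    have hsum := measure_add_measure_compl
      (measurableSet_Iic : MeasurableSet (Set.Iic (t i))) (μ := μ i)
    rw [Set.compl_Iic, h0, add_zero, measure_univ] at hsum
    rw [hsum] at h
    simp at h
  -- t i lies in the support of μ i
  have htsupp : ∀ i : Fin n, t i ∈ msupport (μ i) := by
    intro i
    obtain ⟨a, ha, hasupp⟩ := exists_mem_msupport (μ i) (hpos i)
    obtain ⟨b, hb, hbsupp⟩ := exists_mem_msupport (μ i) (hlt i)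
    exact hconn i a b (t i) hasupp hbsupp (Set.mem_Iic.mp ha) (le_of_lt (Set.mem_Ioi.mp hb))
  -- t lies in the support of the product measure
  have htpi : t ∈ msupport (Measure.pi μ) := by
    intro U hU htU
    obtain ⟨I, s, hs, hsub⟩ := isOpen_pi_iff.mp hU t htU
    set s' : Fin n → Set ℝ := fun i => if i ∈ I then s i else Set.univ with hs'
    have hsub' : Set.pi Set.univ s' ⊆ U := by
      refine subset_trans ?_ hsub
      intro x hx j hj
      have hjI : j ∈ I := hj
      have h2 : x j ∈ (if j ∈ I then s j else Set.univ) := hx j (Set.mem_univ j)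
      rwa [if_pos hjI] at h2
    refine lt_of_lt_of_le ?_ (measure_mono hsub')
    rw [Measure.pi_pi μ s']
    rw [CanonicallyOrderedAdd.prod_pos]
    intro i _
    by_cases hi : i ∈ I
    · show 0 < μ i (if i ∈ I then s i else Set.univ)
      rw [if_pos hi]
      exact htsupp i (s i) (hs i hi).1 (hs i hi).2
    · show 0 < μ i (if i ∈ I then s i else Set.univ)
      rw [if_neg hi, measure_univ]
      exact zero_lt_one
  -- conclude
  intro U hU hvU
  rw [Measure.map_apply hsolve_cont.measurable hU.measurableSet]
  exact htpi _ (hU.preimage hsolve_cont) (by rw [Set.mem_preimage, hst]; exact hvU)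
end
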